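/- For all a₁, a₂, a₄ ∈ ℝ, define the real polynomials a = X⁴ + a₁X³ + a₂X² + a₄, b = X² + (a₁/2)X, c = c₁X² + c₃ where c₁ = (2a₂ − (3/2)a₁²)(a₂ − ¼a₁²) − 4a₄ and c₃ = 2(a₂ − ¼a₁²)a₄, and ȧ = ȧ₁X³ + ȧ₂X² + ȧ₄ where ȧ₁ = (4a₂ − 3a₁²)(a₂ − ¼a₁²) − 16a₄, ȧ₂ = −4a₁a₄, ȧ₄ = 6a₁(a₂ − ¼a₁²)a₄, and ḃ = ½ȧ₁X. Then the polynomial identity 2a·ḃ − ȧ·b = 2a·c' − a'·c holds, where primes denote differentiation of polynomials. -/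
import Mathlib


open Polynomial

/-- The explicit polynomial vector field solving the Whitham equation
`2a·ḃ − ȧ·b = 2a·c' − a'·c` on the blown-up space of quartic spectral data. -/
theorem stmt_9 (a₁ a₂ a₄ c₁ c₃ da₁ da₂ da₄ : ℝ)
    (hc₁ : c₁ = (2 * a₂ - 3/2 * a₁ ^ 2) * (a₂ - 1/4 * a₁ ^ 2) - 4 * a₄)
    (hc₃ : c₃ = 2 * (a₂ - 1/4 * a₁ ^ 2) * a₄)
    (hda₁ : da₁ = (4 * a₂ - 3 * a₁ ^ 2) * (a₂ - 1/4 * a₁ ^ 2) - 16 * a₄)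
    (hda₂ : da₂ = -4 * a₁ * a₄)
    (hda₄ : da₄ = 6 * a₁ * (a₂ - 1/4 * a₁ ^ 2) * a₄)
    (a b c da db : ℝ[X])
    (ha : a = X ^ 4 + C a₁ * X ^ 3 + C a₂ * X ^ 2 + C a₄)
    (hb : b = X ^ 2 + C (a₁ / 2) * X)
    (hc : c = C c₁ * X ^ 2 + C c₃)
    (hda : da = C da₁ * X ^ 3 + C da₂ * X ^ 2 + C da₄)
    (hdb : db = C (da₁ / 2) * X) :
    2 * a * db - da * b = 2 * a * derivative c - derivative a * c := by
  subst ha hb hc hda hdb hc₁ hc₃ hda₁ hda₂ hda₄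
  apply Polynomial.funext
  intro x
  simp only [derivative_add, Polynomial.derivative_C_mul, derivative_X_pow, derivative_C,
    derivative_X, eval_add, eval_sub, eval_mul, eval_pow, eval_C, eval_X, eval_ofNat,
    eval_one, eval_zero, mul_one, add_zero]
  push_cast
  ring
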